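/- Let G be a locally finite, connected graph and k ∈ ℕ. Then every tight separation of G of finite order is crossed by only finitely many tight separations of G of order at most k. -/

import Mathlib

namespace LS

open SimpleGraph

variable {V : Type*}

/-- `(A, B)` is an (oriented) separation of `G`: the two sides cover `V`
and there is no edge between `A ∖ B` and `B ∖ A`. -/
def IsSep (G : SimpleGraph V) (A B : Set V) : Prop :=
  A ∪ B = Set.univ ∧ ∀ a ∈ A \ B, ∀ b ∈ B \ A, ¬G.Adj a b

/-- `(A,B) ≥ (C,D)` for oriented separations, i.e. `A ⊆ C` and `B ⊇ D`. -/
def SepGE (s t : Set V × Set V) : Prop := s.1 ⊆ t.1 ∧ t.2 ⊆ s.2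

/-- Two (unoriented) separations are nested if they have `≥`-comparable orientations. -/
def Nested (s t : Set V × Set V) : Prop :=
  SepGE s t ∨ SepGE s (t.2, t.1) ∨ SepGE (s.2, s.1) t ∨ SepGE (s.2, s.1) (t.2, t.1)

/-- Two separations cross if they are not nested. -/
def Crosses (s t : Set V × Set V) : Prop := ¬Nested s t

/-- The neighbourhood `N_G(K)` of a vertex set `K`. -/
def nbhdSet (G : SimpleGraph V) (K : Set V) : Set V :=
  {v | v ∉ K ∧ ∃ u ∈ K, G.Adj u v}

/-- `K` is (the vertex set of) a connected component of the subgraph of `G` induced on `S`. -/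
def IsCompOf (G : SimpleGraph V) (K S : Set V) : Prop :=
  K.Nonempty ∧ K ⊆ S ∧ (G.induce K).Connected ∧ ∀ a ∈ K, ∀ b ∈ S, G.Adj a b → b ∈ K

/-- `K` is a component of `G − X` that is tight at `X`, i.e. `N_G(K) = X`. -/
def TightCompAt (G : SimpleGraph V) (K X : Set V) : Prop :=
  IsCompOf G K Xᶜ ∧ nbhdSet G K = X

/-- A separation `{A,B}` is tight if `G − (A ∩ B)` has tight components
contained in `A` and in `B`, respectively. -/
def TightSep (G : SimpleGraph V) (A B : Set V) : Prop :=
  (∃ K, TightCompAt G K (A ∩ B) ∧ K ⊆ A) ∧ ∃ K, TightCompAt G K (A ∩ B) ∧ K ⊆ B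

/-- `X` is a tight separator: `G − X` has at least two components tight at `X`. -/
def TightSeparator (G : SimpleGraph V) (X : Set V) : Prop :=
  ∃ K₁ K₂, K₁ ≠ K₂ ∧ TightCompAt G K₁ X ∧ TightCompAt G K₂ X

/-- The set `E_G(S,T)` of edges of `G` with one end in `S` and the other in `T`. -/
def edgesBetween (G : SimpleGraph V) (S T : Set V) : Set (Sym2 V) :=
  {e | ∃ u v, G.Adj u v ∧ e = s(u, v) ∧ u ∈ S ∧ v ∈ T}

/-- `∂X`: the set of edges of `G` with exactly one end in `X`. -/
def edgeBdry (G : SimpleGraph V) (X : Set V) : Set (Sym2 V) :=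
  {e | ∃ u v, G.Adj u v ∧ e = s(u, v) ∧ u ∈ X ∧ v ∉ X}

/-- The separator of an oriented separation. -/
def tsSep (s : Set V × Set V) : Set V := s.1 ∩ s.2

/-- `p` lists the three distinct oriented separations of a ⊤-star. -/
def IsTStar (G : SimpleGraph V) (p : Fin 3 → Set V × Set V) : Prop :=
  Function.Injective p ∧ (∀ i, IsSep G (p i).1 (p i).2) ∧
  (∀ i j, i ≠ j → Disjoint ((p i).1 \ (p i).2) ((p j).1 \ (p j).2)) ∧
  (⋃ i, ((p i).1 \ (p i).2)) = (⋃ i, tsSep (p i))ᶜ ∧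
  ∀ i, ∀ v ∈ tsSep (p i), ∃ j, j ≠ i ∧ v ∈ tsSep (p j)

/-- The centre `Z` of a ⊤-star. -/
def tsCentre (p : Fin 3 → Set V × Set V) : Set V := ⋂ i, tsSep (p i)

/-- The `ij`-link `X_{ij}` of a ⊤-star. -/
def tsLink (p : Fin 3 → Set V × Set V) (i j : Fin 3) : Set V :=
  (tsSep (p i) ∩ tsSep (p j)) \ tsCentre p

/-- The ⊤-star `p` is relevant with base `p 0`. -/
def RelevantTStar (G : SimpleGraph V) (p : Fin 3 → Set V × Set V) : Prop :=
  IsTStar G p ∧ TightSep G (p 0).1 (p 0).2 ∧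
  ∀ x ∈ tsLink p 1 2, ∀ i : Fin 3, i ≠ 0 →
    (∃ y ∈ tsLink p 0 i, G.Adj x y) ∨
    ∃ y ∈ tsLink p 0 i ∪ tsCentre p, ∃ K, IsCompOf G K ((p i).1 \ (p i).2) ∧
      x ∈ nbhdSet G K ∧ y ∈ nbhdSet G K

/-- A bottleneck of order `k` in `G`, encoded as a set of oriented separations
closed under reversal (representing a set of unoriented separations). -/
def IsBottleneck (G : SimpleGraph V) (k : ℕ) (β : Set (Set V × Set V)) : Prop :=
  β.Nonempty ∧ (∀ s ∈ β, (s.2, s.1) ∈ β) ∧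
  (∀ s ∈ β, IsSep G s.1 s.2 ∧ TightSep G s.1 s.2 ∧ (s.1 ∩ s.2).encard = k) ∧
  ∀ p : Fin 3 → Set V × Set V, RelevantTStar G p →
    (∀ i, (tsSep (p i)).encard ≤ (k : ℕ∞)) → p 0 ∈ β → p 1 ∈ β ∨ p 2 ∈ β

/-! ### Tangles -/

/-- A tangle of order `ℓ` in `G`. -/
def IsTangle (G : SimpleGraph V) (ℓ : ℕ) (τ : Set (Set V × Set V)) : Prop :=
  (∀ s ∈ τ, IsSep G s.1 s.2 ∧ (s.1 ∩ s.2).encard < (ℓ : ℕ∞)) ∧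
  (∀ A B : Set V, IsSep G A B → (A ∩ B).encard < (ℓ : ℕ∞) → ((A, B) ∈ τ ∨ (B, A) ∈ τ)) ∧
  (∀ A B : Set V, (A, B) ∈ τ → (B, A) ∈ τ → A = B) ∧
  ∀ s₁ ∈ τ, ∀ s₂ ∈ τ, ∀ s₃ ∈ τ,
    ¬(s₁.1 ∪ s₂.1 ∪ s₃.1 = Set.univ ∧
      ∀ u v : V, G.Adj u v →
        (u ∈ s₁.1 ∧ v ∈ s₁.1) ∨ (u ∈ s₂.1 ∧ v ∈ s₂.1) ∨ (u ∈ s₃.1 ∧ v ∈ s₃.1))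

/-- The separation `{A,B}` distinguishes the tangles `τ` and `τ'`. -/
def DistinguishesT (τ τ' : Set (Set V × Set V)) (A B : Set V) : Prop :=
  ((A, B) ∈ τ ∧ (B, A) ∈ τ') ∨ ((B, A) ∈ τ ∧ (A, B) ∈ τ')

/-- The separation `{A,B}` distinguishes the vertex sets `Y` and `Z`. -/
def DistSets (Y Z A B : Set V) : Prop :=
  (Y ⊆ A ∧ (Y ∩ (A \ B)).Nonempty ∧ Z ⊆ B ∧ (Z ∩ (B \ A)).Nonempty) ∨
  (Y ⊆ B ∧ (Y ∩ (B \ A)).Nonempty ∧ Z ⊆ A ∧ (Z ∩ (A \ B)).Nonempty)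

/-! ### The construction of the nested sets `N^k(G)` -/

/-- `X^k`: the union of all `k`-bottlenecks in `G`. -/
def Xk (G : SimpleGraph V) (k : ℕ) : Set (Set V × Set V) :=
  {s | ∃ β, IsBottleneck G k β ∧ s ∈ β}

/-- `x^k(s)`: the number of separations in `X^k` that `s` crosses. -/
noncomputable def xk (G : SimpleGraph V) (k : ℕ) (s : Set V × Set V) : ℕ :=
  {t ∈ Xk G k | Crosses s t}.ncard

/-- `N^k(G,β)` relative to a previously constructed set `M` of separations:
the elements of `β` nested with `M` that minimise `x^k` among those. -/
def NkOfBeta (G : SimpleGraph V) (M : Set (Set V × Set V)) (k : ℕ)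
    (β : Set (Set V × Set V)) : Set (Set V × Set V) :=
  {s ∈ β | (∀ t ∈ M, Nested s t) ∧
    ∀ s' ∈ β, (∀ t ∈ M, Nested s' t) → xk G k s ≤ xk G k s'}

/-- `N^k(G)` relative to a previously constructed set `M`. -/
def NkStep (G : SimpleGraph V) (M : Set (Set V × Set V)) (k : ℕ) :
    Set (Set V × Set V) :=
  {s | ∃ β, IsBottleneck G k β ∧ s ∈ NkOfBeta G M k β}

/-- `N^{<k}(G) = ⋃_{j<k} N^j(G)`. -/
noncomputable def Nlt (G : SimpleGraph V) : ℕ → Set (Set V × Set V)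
  | 0 => ∅
  | k + 1 => Nlt G k ∪ NkStep G (Nlt G k) k

/-- `N^k(G)`. -/
noncomputable def Nk (G : SimpleGraph V) (k : ℕ) : Set (Set V × Set V) :=
  NkStep G (Nlt G k) k

/-- `N(G) = ⋃_k N^k(G)`. -/
noncomputable def NSet (G : SimpleGraph V) : Set (Set V × Set V) :=
  ⋃ k, Nk G k

/-! ### Walks, local components and local separations -/

/-- An `X`-walk: a walk having precisely its first and last vertex in `X`. -/
def IsXWalk (G : SimpleGraph V) (X : Set V) {u v : V} (W : G.Walk u v) : Prop :=
  u ∈ X ∧ v ∈ X ∧ ∀ w ∈ W.support, w ∈ X → w = u ∨ w = v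

/-- An `r`-local `X`-walk: an `X`-walk contained in a cycle of length `≤ r`,
or an `X`-walk consisting of a single `X`-edge. -/
def IsLocalXWalk (G : SimpleGraph V) (r : ℕ) (X : Set V) {u v : V} (W : G.Walk u v) :
    Prop :=
  IsXWalk G X W ∧
  ((∃ (a : V) (C : G.Walk a a), C.IsCycle ∧ C.length ≤ r ∧ ∀ e ∈ W.edges, e ∈ C.edges) ∨
    W.length = 1)

/-- An `r`-local `X`-path. -/
def IsLocalXPath (G : SimpleGraph V) (r : ℕ) (X : Set V) {u v : V} (W : G.Walk u v) :
    Prop :=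
  IsLocalXWalk G r X W ∧ W.IsPath

/-- Walks that are concatenations of `r`-local `X`-paths. -/
inductive ConcatLocalPaths (G : SimpleGraph V) (r : ℕ) (X : Set V) :
    ∀ {u v : V}, G.Walk u v → Prop
  | single {u v : V} (W : G.Walk u v) (h : IsLocalXPath G r X W) :
      ConcatLocalPaths G r X W
  | comp {u v w : V} (W₁ : G.Walk u v) (W₂ : G.Walk v w)
      (h₁ : IsLocalXPath G r X W₁) (h₂ : ConcatLocalPaths G r X W₂) :
      ConcatLocalPaths G r X (W₁.append W₂)

/-- `W ∈ W_r(X)`: `W` is a concatenation of `r`-local `X`-paths repeating no vertex of `X`. -/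
def MemWr (G : SimpleGraph V) (r : ℕ) (X : Set V) {u v : V} (W : G.Walk u v) : Prop :=
  ConcatLocalPaths G r X W ∧ ∀ x ∈ X, ¬W.support.Duplicate x

/-- `X` is `r`-tomic: any two of its vertices are joined by a walk in `W_r(X)`. -/
def Rtomic (G : SimpleGraph V) (r : ℕ) (X : Set V) : Prop :=
  ∀ x ∈ X, ∀ y ∈ X, x ≠ y → ∃ W : G.Walk x y, MemWr G r X W

/-- One step of the relation generating the `r`-local components at `X`:
`e = f`, or `e` and `f` are the first and last edges of an `r`-local `X`-walk
(both required to lie in `∂X`). -/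
def LocalEdgeStep (G : SimpleGraph V) (r : ℕ) (X : Set V) (e f : Sym2 V) : Prop :=
  e ∈ edgeBdry G X ∧ f ∈ edgeBdry G X ∧
  (e = f ∨ ∃ (u v : V) (W : G.Walk u v), IsLocalXWalk G r X W ∧
      W.edges.head? = some e ∧ W.edges.getLast? = some f)

/-- `F` is an `r`-local component at `X`: an equivalence class of the transitive
closure of `LocalEdgeStep` on `∂X`. -/
def LocalCompAt (G : SimpleGraph V) (r : ℕ) (X : Set V) (F : Set (Sym2 V)) : Prop :=
  ∃ e ∈ edgeBdry G X, F = {f | Relation.ReflTransGen (LocalEdgeStep G r X) e f}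

/-- An edge set `F` is tight with respect to `X` if every vertex of `X`
is incident with an edge of `F`. -/
def TightLocalComp (X : Set V) (F : Set (Sym2 V)) : Prop :=
  ∀ x ∈ X, ∃ e ∈ F, x ∈ e

/-- `X` is a tight `r`-local separator: at least two tight `r`-local components at `X`. -/
def TightLocalSeparator (G : SimpleGraph V) (r : ℕ) (X : Set V) : Prop :=
  ∃ F₁ F₂, F₁ ≠ F₂ ∧ LocalCompAt G r X F₁ ∧ LocalCompAt G r X F₂ ∧
    TightLocalComp X F₁ ∧ TightLocalComp X F₂

/-- `(E₁, X, E₂)` is an (oriented) `r`-local separation of `G`. -/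
def IsLocalSep (G : SimpleGraph V) (r : ℕ) (E₁ : Set (Sym2 V)) (X : Set V)
    (E₂ : Set (Sym2 V)) : Prop :=
  Disjoint E₁ E₂ ∧ E₁ ∪ E₂ = edgeBdry G X ∧
    ∀ F, LocalCompAt G r X F → F ⊆ E₁ ∨ F ⊆ E₂

/-- A tight `r`-local separation: each side includes a tight `r`-local component at `X`. -/
def TightLocalSep (G : SimpleGraph V) (r : ℕ) (E₁ : Set (Sym2 V)) (X : Set V)
    (E₂ : Set (Sym2 V)) : Prop :=
  IsLocalSep G r E₁ X E₂ ∧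
  (∃ F, LocalCompAt G r X F ∧ TightLocalComp X F ∧ F ⊆ E₁) ∧
  ∃ F, LocalCompAt G r X F ∧ TightLocalComp X F ∧ F ⊆ E₂

/-- The oriented `r`-local separation `s_r` induced by the oriented separation
`s = (A₁, A₂)`: its separator is `X = A₁ ∩ A₂`, and its sides are
`E_i = E_G(A_i ∖ X, X)`. -/
def inducedLocal (G : SimpleGraph V) (s : Set V × Set V) :
    Set (Sym2 V) × Set V × Set (Sym2 V) :=
  (edgesBetween G (s.1 \ (s.1 ∩ s.2)) (s.1 ∩ s.2), s.1 ∩ s.2,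
    edgesBetween G (s.2 \ (s.1 ∩ s.2)) (s.1 ∩ s.2))

/-- Some cycle of `G` of length `≤ r` alternates between the disjoint sets `X` and `Y`:
it visits four distinct vertices `x, y, x', y'` in this cyclic order with
`x, x' ∈ X` and `y, y' ∈ Y`. -/
def Alternates (G : SimpleGraph V) (r : ℕ) (X Y : Set V) : Prop :=
  ∃ (a : V) (C : G.Walk a a), C.IsCycle ∧ C.length ≤ r ∧
    ∃ (x y x' y' : V) (l₁ l₂ l₃ l₄ l₅ : List V),
      x ∈ X ∧ x' ∈ X ∧ y ∈ Y ∧ y' ∈ Y ∧ x ≠ x' ∧ y ≠ y' ∧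
      C.support = l₁ ++ x :: l₂ ++ y :: l₃ ++ x' :: l₄ ++ y' :: l₅

/-- `X` and `Y` are `r`-coupled. -/
def RCoupled (G : SimpleGraph V) (r : ℕ) (X Y : Set V) : Prop :=
  (X ∩ Y).Nonempty ∨ (Disjoint X Y ∧ Alternates G r X Y)

/-- The `X`-link for the side `Fi` of an `r`-local separation with separator `Y`:
vertices `x ∈ X ∖ Y` from which some walk in `W_r(X)` visits `Y` with its first
edge in `∂Y` lying in `Fi`. -/
def LocalLink (G : SimpleGraph V) (r : ℕ) (X Y : Set V) (Fi : Set (Sym2 V)) : Set V :=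
  {x | x ∈ X \ Y ∧ ∃ (z : V) (W : G.Walk x z), MemWr G r X W ∧
      (∃ y ∈ Y, y ∈ W.support) ∧
      ∃ (e : Sym2 V) (l₁ l₂ : List (Sym2 V)), W.edges = l₁ ++ e :: l₂ ∧
        e ∈ edgeBdry G Y ∧ e ∈ Fi ∧ ∀ e' ∈ l₁, e' ∉ edgeBdry G Y}

/-- The `r`-local separations `{E₁,X,E₂}` and `{F₁,Y,F₂}` cross. -/
def LocalCrosses (G : SimpleGraph V) (r : ℕ) (E₁ : Set (Sym2 V)) (X : Set V)
    (E₂ : Set (Sym2 V)) (F₁ : Set (Sym2 V)) (Y : Set V) (F₂ : Set (Sym2 V)) : Prop :=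
  RCoupled G r X Y ∧ ∀ i j : Bool,
    (LocalLink G r X Y (cond j F₁ F₂)).Nonempty ∨
    (LocalLink G r Y X (cond i E₁ E₂)).Nonempty ∨
    ((cond i E₁ E₂) ∩ (cond j F₁ F₂) ∩ edgeBdry G (X ∩ Y)).Nonempty

/-- The edge set of a walk, as a set. -/
def walkEdgeSet {G : SimpleGraph V} {a b : V} (W : G.Walk a b) : Set (Sym2 V) :=
  {e | e ∈ W.edges}

/-- The binary cycle space of `G` is generated by the cycles of length `≤ r`:
the edge set of every cycle is a symmetric difference of edge sets of cycles
of length `≤ r`. -/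
def CycleSpaceGenShort (G : SimpleGraph V) (r : ℕ) : Prop :=
  ∀ ⦃a : V⦄ (C : G.Walk a a), C.IsCycle →
    ∃ L : List ((b : V) × G.Walk b b),
      (∀ p ∈ L, p.2.IsCycle ∧ p.2.length ≤ r) ∧
      walkEdgeSet C = L.foldr (fun p E => symmDiff (walkEdgeSet p.2) E) ∅

/-! ### Local ⊤-stars and local bottlenecks -/

/-- `q` lists the three oriented `r`-local separations of an `r`-local ⊤-star. -/
def IsLocalTStar (G : SimpleGraph V) (r : ℕ)
    (q : Fin 3 → Set (Sym2 V) × Set V × Set (Sym2 V)) : Prop :=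
  Function.Injective q ∧
  (∀ i, IsLocalSep G r (q i).1 (q i).2.1 (q i).2.2) ∧
  (∀ i j, i ≠ j → Disjoint (q i).1 (q j).1) ∧
  (⋃ i, (q i).1) = edgeBdry G (⋃ i, (q i).2.1) ∧
  (∀ i, ∀ v ∈ (q i).2.1, ∃ j, j ≠ i ∧ v ∈ (q j).2.1) ∧
  ∀ F, LocalCompAt G r (⋃ i, (q i).2.1) F → ∃ i, F ⊆ (q i).1

/-- The `r`-local ⊤-star `q` is relevant with base `q 0`. -/
def RelevantLocalTStar (G : SimpleGraph V) (r : ℕ)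
    (q : Fin 3 → Set (Sym2 V) × Set V × Set (Sym2 V)) : Prop :=
  IsLocalTStar G r q ∧ TightLocalSep G r (q 0).1 (q 0).2.1 (q 0).2.2 ∧
  ∀ x ∈ ((q 1).2.1 ∩ (q 2).2.1) \ ⋂ j, (q j).2.1, ∀ i : Fin 3, i ≠ 0 →
    (∃ y ∈ ((q 0).2.1 ∩ (q i).2.1) \ ⋂ j, (q j).2.1, G.Adj x y) ∨
    ∃ F, LocalCompAt G r (⋃ j, (q j).2.1) F ∧ F ⊆ (q i).1 ∧
      (∃ e ∈ F, x ∈ e) ∧ ∃ e ∈ F, ∃ y ∈ (q 0).2.1 ∩ (q i).2.1, y ∈ e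

/-- An `r`-local bottleneck of order `k` in `G`, encoded as a set of oriented
`r`-local separations closed under reversal. -/
def IsLocalBottleneck (G : SimpleGraph V) (r k : ℕ)
    (β : Set (Set (Sym2 V) × Set V × Set (Sym2 V))) : Prop :=
  β.Nonempty ∧ (∀ q ∈ β, (q.2.2, q.2.1, q.1) ∈ β) ∧
  (∀ q ∈ β, TightLocalSep G r q.1 q.2.1 q.2.2 ∧ q.2.1.encard = (k : ℕ∞)) ∧
  ∀ p : Fin 3 → Set (Sym2 V) × Set V × Set (Sym2 V), RelevantLocalTStar G r p →
    (∀ i, ((p i).2.1).encard ≤ (k : ℕ∞)) → p 0 ∈ β → p 1 ∈ β ∨ p 2 ∈ β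

/-!
Suppose infinitely many tight separations of order at most `k` cross `{A, B}` and have pairwise
distinct separators. Along a non-principal ultrafilter let `Y` be the set of vertices lying in
almost all of these separators: then `|Y| ≤ k`, almost every separator strictly contains `Y`,
and any fixed walk avoiding `Y` avoids almost every separator. It therefore suffices to find two
vertices that lie on opposite sides of almost every separation and are joined by a walk
avoiding `Y`.

If `Y = ∅`, almost every separator misses the finite set `A ∩ B`; a tight separation crossing
`{A, B}` whose separator misses `A ∩ B` must have vertices of `A ∩ B` on both of its sides, and as
`A ∩ B` is finite the same two vertices do for almost every separation. If `y ∈ Y`, local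
finiteness fixes neighbours of `y` in the two tight components of almost every separation, and
any vertex of a separator outside `Y` links these two tight components by a walk avoiding `Y`.

So only finitely many separators occur, and each finite nonempty separator `X` carries only
finitely many separations, since such a separation is determined by the neighbours of `X` on its
first side.
-/

section Separations

variable {G : SimpleGraph V} {A B C D K : Set V} {u v : V}

lemma IsSep.symm (h : IsSep G A B) : IsSep G B A :=
  ⟨by rw [Set.union_comm, h.1], fun a ha b hb hab => h.2 b hb a ha hab.symm⟩

lemma IsSep.mem_of_notMem (h : IsSep G A B) (hv : v ∉ A) : v ∈ B :=
  (h.1 ▸ Set.mem_univ v : v ∈ A ∪ B).resolve_left hv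

lemma IsSep.mem_sdiff_or_mem_sdiff (h : IsSep G A B) (hv : v ∉ A ∩ B) :
    v ∈ A \ B ∨ v ∈ B \ A := by
  by_cases hA : v ∈ A
  · exact Or.inl ⟨hA, fun hB => hv ⟨hA, hB⟩⟩
  · exact Or.inr ⟨h.mem_of_notMem hA, hA⟩

lemma IsSep.eq_compl_union_inter (h : IsSep G C D) : D = Cᶜ ∪ (C ∩ D) := by
  ext v
  by_cases hC : v ∈ C
  · simp [hC]
  · simp [hC, h.mem_of_notMem hC]

lemma IsSep.mem_sdiff_of_walk (h : IsSep G A B) (W : G.Walk u v)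
    (hW : ∀ w ∈ W.support, w ∉ A ∩ B) (hu : u ∈ A \ B) : v ∈ A \ B := by
  by_contra hv
  obtain ⟨d, hd, hp, hq⟩ := W.exists_boundary_dart _ hu hv
  rcases h.mem_sdiff_or_mem_sdiff (hW _ (W.dart_snd_mem_support_of_mem_darts hd)) with hq' | hq'
  · exact hq hq'
  · exact h.2 _ hp _ hq' d.adj

lemma exists_walk_of_induce_connected (hK : (G.induce K).Connected) (hu : u ∈ K) (hv : v ∈ K) :
    ∃ W : G.Walk u v, ∀ w ∈ W.support, w ∈ K := by
  obtain ⟨W⟩ := hK.preconnected ⟨u, hu⟩ ⟨v, hv⟩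
  refine ⟨W.map (Embedding.induce K).toHom, fun w hw => ?_⟩
  obtain ⟨x, -, rfl⟩ := List.mem_map.1 (Walk.support_map _ W ▸ hw)
  exact x.2

lemma IsSep.subset_sdiff_or_subset_sdiff (h : IsSep G A B) (hK : (G.induce K).Connected)
    (hKS : Disjoint K (A ∩ B)) : K ⊆ A \ B ∨ K ⊆ B \ A := by
  obtain ⟨⟨u, hu⟩⟩ := hK.nonempty
  have hwalk : ∀ {A B : Set V}, IsSep G A B → Disjoint K (A ∩ B) → u ∈ A \ B → K ⊆ A \ B :=
    fun hAB hKS hu' v hv => by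
      obtain ⟨W, hW⟩ := exists_walk_of_induce_connected hK hu hv
      exact hAB.mem_sdiff_of_walk W (fun w hw => Set.disjoint_left.1 hKS (hW w hw)) hu'
  rcases h.mem_sdiff_or_mem_sdiff (Set.disjoint_left.1 hKS hu) with hA | hB
  · exact Or.inl (hwalk h hKS hA)
  · exact Or.inr (hwalk h.symm (Set.inter_comm A B ▸ hKS) hB)

end Separations

section TightComponents

variable {G : SimpleGraph V} {C D K K₁ K₂ X Y : Set V} {a b x z : V}

lemma TightCompAt.disjoint (h : TightCompAt G K X) : Disjoint K X :=
  Set.subset_compl_iff_disjoint_right.1 h.1.2.1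

lemma TightCompAt.exists_adj (h : TightCompAt G K X) (hx : x ∈ X) : ∃ u ∈ K, G.Adj u x :=
  (h.2 ▸ hx : x ∈ nbhdSet G K).2

lemma TightCompAt.subset_sdiff_left (h : TightCompAt G K (C ∩ D)) (hK : K ⊆ C) : K ⊆ C \ D :=
  fun _ hv => ⟨hK hv, fun hD => Set.disjoint_left.1 h.disjoint hv ⟨hK hv, hD⟩⟩

lemma TightCompAt.subset_sdiff_right (h : TightCompAt G K (C ∩ D)) (hK : K ⊆ D) : K ⊆ D \ C :=
  fun _ hv => ⟨hK hv, fun hC => Set.disjoint_left.1 h.disjoint hv ⟨hC, hK hv⟩⟩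

lemma TightCompAt.exists_walk (h : TightCompAt G K X) (ha : a ∈ K) (hx : x ∈ X) :
    ∃ W : G.Walk a x, ∀ w ∈ W.support, w ∈ K ∨ w = x := by
  obtain ⟨u, hu, hux⟩ := h.exists_adj hx
  obtain ⟨W, hW⟩ := exists_walk_of_induce_connected h.1.2.2.1 ha hu
  refine ⟨W.concat hux, fun w hw => ?_⟩
  rw [Walk.support_concat, List.mem_append, List.mem_singleton] at hw
  exact hw.imp_left (hW w)

lemma exists_walk_avoiding_of_tightCompAt (h₁ : TightCompAt G K₁ X) (h₂ : TightCompAt G K₂ X)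
    (hYX : Y ⊆ X) (hz : z ∈ X \ Y) (ha : a ∈ K₁) (hb : b ∈ K₂) :
    ∃ W : G.Walk a b, ∀ w ∈ W.support, w ∉ Y := by
  have avoid : ∀ {K}, TightCompAt G K X → ∀ w, w ∈ K ∨ w = z → w ∉ Y := by
    rintro K hK w (hw | rfl) hwY
    · exact Set.disjoint_left.1 hK.disjoint hw (hYX hwY)
    · exact hz.2 hwY
  obtain ⟨W₁, hW₁⟩ := h₁.exists_walk ha hz.1
  obtain ⟨W₂, hW₂⟩ := h₂.exists_walk hb hz.1
  refine ⟨W₁.append W₂.reverse, fun w hw => ?_⟩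
  rw [Walk.mem_support_append_iff, Walk.support_reverse, List.mem_reverse] at hw
  rcases hw with hw | hw
  · exact avoid h₁ w (hW₁ w hw)
  · exact avoid h₂ w (hW₂ w hw)

lemma TightSep.inter_nonempty (hG : G.Connected) (hCD : IsSep G C D) (h : TightSep G C D) :
    (C ∩ D).Nonempty := by
  obtain ⟨⟨K₁, h₁, hK₁⟩, ⟨K₂, h₂, hK₂⟩⟩ := h
  obtain ⟨u, hu⟩ := h₁.1.1
  obtain ⟨v, hv⟩ := h₂.1.1
  by_contra hX
  have hvC := hCD.mem_sdiff_of_walk (hG.preconnected u v).some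
    (fun w _ hw => hX ⟨w, hw⟩) (h₁.subset_sdiff_left hK₁ hu)
  exact (h₂.subset_sdiff_right hK₂ hv).2 hvC.1

end TightComponents

section Nestedness

variable {G : SimpleGraph V} {A B C D T : Set V}

lemma nested_swap_right {s : Set V × Set V} : Nested s (D, C) ↔ Nested s (C, D) := by
  unfold Nested SepGE
  tauto

/-- The tight component `T` pins `C ∩ D` to `A ∖ B`; a vertex of `D ∖ C` in `B ∖ A` would then
be cut off from `T` inside `G`. -/
lemma sepGE_of_tightCompAt_subset_sdiff (hG : G.Connected) (hAB : IsSep G A B)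
    (hCD : IsSep G C D) (hT : TightCompAt G T (C ∩ D)) (hTA : T ⊆ A \ B)
    (hdisj : Disjoint (A ∩ B) (C ∩ D)) (hsub : A ∩ B ⊆ C \ D) : SepGE (B, A) (C, D) := by
  have hXA : C ∩ D ⊆ A \ B := fun x hx => by
    obtain ⟨u, hu, hux⟩ := hT.exists_adj hx
    exact (hAB.mem_sdiff_or_mem_sdiff (Set.disjoint_right.1 hdisj hx)).resolve_right
      fun hxB => hAB.2 u (hTA hu) x hxB hux
  have hDC : D \ C ⊆ A \ B := by
    intro d hd
    by_contra hdA
    have hdB : d ∈ B \ A :=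
      (hAB.mem_sdiff_or_mem_sdiff fun hS => (hsub hS).2 hd.1).resolve_left hdA
    obtain ⟨t, ht⟩ := hT.1.1
    obtain ⟨e, he, hp, hq⟩ := (hG.preconnected d t).some.exists_boundary_dart
      ((D \ C) ∩ (B \ A)) ⟨hd, hdB⟩ fun h => h.2.2 (hTA ht).1
    by_cases hqX : e.snd ∈ C ∩ D
    · exact hAB.2 _ (hXA hqX) _ hp.2 e.adj.symm
    rcases hCD.mem_sdiff_or_mem_sdiff hqX with hqC | hqD
    · exact hCD.2 _ hqC _ hp.1 e.adj.symm
    · have hqA := (hAB.mem_sdiff_or_mem_sdiff fun hS => (hsub hS).2 hqD.1).resolve_right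
        fun hqB => hq ⟨hqD, hqB⟩
      exact hAB.2 _ hqA _ hp.2 e.adj.symm
  refine ⟨fun b hb => ?_, fun d hd => ?_⟩
  · by_contra hbC
    exact (hDC ⟨hCD.mem_of_notMem hbC, hbC⟩).2 hb
  · by_cases hdC : d ∈ C
    · exact (hXA ⟨hdC, hd⟩).1
    · exact (hDC ⟨hd, hdC⟩).1

lemma nested_of_subset_sdiff (hG : G.Connected) (hAB : IsSep G A B) (hCD : IsSep G C D)
    (hT : TightCompAt G T (C ∩ D)) (hTD : T ⊆ D) (hdisj : Disjoint (A ∩ B) (C ∩ D))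
    (hsub : A ∩ B ⊆ C \ D) : Nested (A, B) (C, D) := by
  have hTS : Disjoint T (A ∩ B) := Set.disjoint_left.2 fun v hv hS =>
    (hT.subset_sdiff_right hTD hv).2 (hsub hS).1
  rcases hAB.subset_sdiff_or_subset_sdiff hT.1.2.2.1 hTS with hTA | hTB
  · exact Or.inr (Or.inr (Or.inl (sepGE_of_tightCompAt_subset_sdiff hG hAB hCD hT hTA hdisj hsub)))
  · rw [Set.inter_comm] at hdisj hsub
    exact Or.inl (sepGE_of_tightCompAt_subset_sdiff hG hAB.symm hCD hT hTB hdisj hsub)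

lemma Crosses.exists_mem_sdiff_of_disjoint (hcross : Crosses (A, B) (C, D)) (hG : G.Connected)
    (hAB : IsSep G A B) (hCD : IsSep G C D) (ht : TightSep G C D)
    (hdisj : Disjoint (A ∩ B) (C ∩ D)) :
    (∃ s ∈ A ∩ B, s ∈ C \ D) ∧ ∃ s ∈ A ∩ B, s ∈ D \ C := by
  have hside : ∀ s ∈ A ∩ B, s ∈ C \ D ∨ s ∈ D \ C := fun s hs =>
    hCD.mem_sdiff_or_mem_sdiff (Set.disjoint_left.1 hdisj hs)
  obtain ⟨⟨T₁, hT₁, hT₁C⟩, ⟨T₂, hT₂, hT₂D⟩⟩ := ht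
  constructor
  · by_contra! h
    rw [Set.inter_comm C D] at hT₁ hdisj
    exact hcross (nested_swap_right.1 (nested_of_subset_sdiff hG hAB hCD.symm hT₁ hT₁C hdisj
      fun s hs => (hside s hs).resolve_left (h s hs)))
  · by_contra! h
    exact hcross (nested_of_subset_sdiff hG hAB hCD hT₂ hT₂D hdisj
      fun s hs => (hside s hs).resolve_right (h s hs))

end Nestedness

section Fibres

variable {G : SimpleGraph V} {C D C' D' : Set V}

lemma IsSep.subset_of_inter_eq (hG : G.Connected) (hCD : IsSep G C D) (hCD' : IsSep G C' D')
    (hX : C' ∩ D' = C ∩ D) (hne : (C ∩ D).Nonempty)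
    (hfixed : ∀ v ∈ C, (∃ x ∈ C ∩ D, G.Adj x v) → v ∈ C') : C ⊆ C' := by
  intro v hvC
  by_contra hvC'
  have hvD : v ∉ D := fun hvD => hvC' (hX ▸ ⟨hvC, hvD⟩ : v ∈ C' ∩ D').1
  obtain ⟨x, hx⟩ := hne
  obtain ⟨e, he, hp, hq⟩ := (hG.preconnected v x).some.exists_boundary_dart
    ((C \ D) ∩ (D' \ C')) ⟨⟨hvC, hvD⟩, hCD'.mem_of_notMem hvC', hvC'⟩ fun h => h.1.2 hx.2
  by_cases hqX : e.snd ∈ C ∩ D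
  · exact hp.2.2 (hfixed _ hp.1.1 ⟨_, hqX, e.adj.symm⟩)
  rcases hCD.mem_sdiff_or_mem_sdiff hqX with hqC | hqD
  · rcases hCD'.mem_sdiff_or_mem_sdiff (hX ▸ hqX) with hqC' | hqD'
    · exact hCD'.2 _ hqC' _ hp.2 e.adj.symm
    · exact hq ⟨hqC, hqD'⟩
  · exact hCD.2 _ hp.1 _ hqD e.adj

lemma finite_setOf_isSep_inter_eq (hlf : ∀ v : V, (G.neighborSet v).Finite) (hG : G.Connected)
    {X : Set V} (hX : X.Finite) (hXne : X.Nonempty) :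
    {t : Set V × Set V | IsSep G t.1 t.2 ∧ t.1 ∩ t.2 = X}.Finite := by
  set E := ⋃ x ∈ X, G.neighborSet x
  have hsub : ∀ {C D C' D' : Set V}, IsSep G C D → C ∩ D = X → IsSep G C' D' → C' ∩ D' = X →
      C ∩ E = C' ∩ E → C ⊆ C' := by
    intro C D C' D' hCD hX hCD' hX' hE
    refine hCD.subset_of_inter_eq hG hCD' (hX'.trans hX.symm) (hX ▸ hXne)
      fun v hv ⟨x, hx, hxv⟩ => ?_
    have hvE : v ∈ C' ∩ E := hE ▸ ⟨hv, Set.mem_biUnion (hX ▸ hx) hxv⟩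
    exact hvE.1
  refine Set.Finite.of_finite_image (f := fun t => t.1 ∩ E) ((hX.biUnion fun x _ => hlf x)
    |>.finite_subsets.subset ?_) ?_
  · rintro _ ⟨t, -, rfl⟩
    exact Set.inter_subset_right
  · rintro ⟨C, D⟩ ⟨hCD, hX₁⟩ ⟨C', D'⟩ ⟨hCD', hX₂⟩ hE
    dsimp only at hCD hX₁ hCD' hX₂ hE
    have hC : C = C' := (hsub hCD hX₁ hCD' hX₂ hE).antisymm (hsub hCD' hX₂ hCD hX₁ hE.symm)
    rw [Prod.mk.injEq, hCD.eq_compl_union_inter, hCD'.eq_compl_union_inter, hX₁, hX₂, hC]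
    exact ⟨rfl, rfl⟩

end Fibres

section Limits

variable {G : SimpleGraph V} {ι : Type*} {C D : ι → Set V}

lemma not_eventually_mem_sdiff_of_walk {l : Filter ι} [l.NeBot]
    (hCD : ∀ i, IsSep G (C i) (D i)) {a b : V} (W : G.Walk a b)
    (hW : ∀ w ∈ W.support, ∀ᶠ i in l, w ∉ C i ∩ D i) :
    ¬∀ᶠ i in l, a ∈ C i \ D i ∧ b ∈ D i \ C i := fun h => by
  obtain ⟨i, ⟨ha, hb⟩, hWi⟩ :=
    (h.and ((Filter.eventually_all_finite W.support.finite_toSet).2 hW)).exists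
  exact hb.2 ((hCD i).mem_sdiff_of_walk W hWi ha).1

variable (𝒰 : Ultrafilter ι)

lemma encard_setOf_eventually_mem_le {X : ι → Set V} {k : ℕ}
    (hk : ∀ i, (X i).encard ≤ k) : {v | ∀ᶠ i in 𝒰, v ∈ X i}.encard ≤ k := by
  by_contra! h
  obtain ⟨F, hF, hFk⟩ := Set.exists_subset_encard_eq (Order.add_one_le_of_lt h)
  obtain ⟨i, hi⟩ := ((Filter.eventually_all_finite
    (Set.finite_of_encard_eq_coe (k := k + 1) hFk)).2 fun v hv => hF hv).exists
  have := (Set.encard_le_encard hi).trans (hk i)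
  rw [hFk] at this
  norm_cast at this
  omega

lemma exists_eventually_mem_sdiff_of_eventually_disjoint {A B : Set V} (hG : G.Connected)
    (hAB : IsSep G A B) (hfin : (A ∩ B).Finite) (hCD : ∀ i, IsSep G (C i) (D i))
    (ht : ∀ i, TightSep G (C i) (D i)) (hcross : ∀ i, Crosses (A, B) (C i, D i))
    (hdisj : ∀ᶠ i in 𝒰, Disjoint (A ∩ B) (C i ∩ D i)) :
    ∃ a b, ∀ᶠ i in 𝒰, a ∈ C i \ D i ∧ b ∈ D i \ C i := by
  have h := hdisj.mono fun i hi =>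
    (hcross i).exists_mem_sdiff_of_disjoint hG hAB (hCD i) (ht i) hi
  obtain ⟨a, -, ha⟩ := (Ultrafilter.eventually_exists_mem_iff hfin).1 (h.mono fun _ => And.left)
  obtain ⟨b, -, hb⟩ := (Ultrafilter.eventually_exists_mem_iff hfin).1 (h.mono fun _ => And.right)
  exact ⟨a, b, ha.and hb⟩

lemma exists_walk_eventually_mem_sdiff_of_eventually_ssubset
    (hlf : ∀ v : V, (G.neighborSet v).Finite) (ht : ∀ i, TightSep G (C i) (D i))
    {Y : Set V} {y : V} (hy : y ∈ Y) (hY : ∀ᶠ i in 𝒰, Y ⊂ C i ∩ D i) :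
    ∃ a b, ∃ W : G.Walk a b, (∀ w ∈ W.support, w ∉ Y) ∧
      ∀ᶠ i in 𝒰, a ∈ C i \ D i ∧ b ∈ D i \ C i := by
  choose T₁ hT₁ hT₁C using fun i => (ht i).1
  choose T₂ hT₂ hT₂D using fun i => (ht i).2
  have hfixed : ∀ {T : ι → Set V}, (∀ i, TightCompAt G (T i) (C i ∩ D i)) →
      ∃ a, ∀ᶠ i in 𝒰, a ∈ T i := fun hT => by
    obtain ⟨a, -, ha⟩ := (Ultrafilter.eventually_exists_mem_iff (hlf y)).1 <|
      hY.mono fun i hi => (hT i).exists_adj (hi.1 hy) |>.imp fun _ h => ⟨h.2.symm, h.1⟩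
    exact ⟨a, ha⟩
  obtain ⟨a, ha⟩ := hfixed hT₁
  obtain ⟨b, hb⟩ := hfixed hT₂
  obtain ⟨i, hYi, hai, hbi⟩ := (hY.and (ha.and hb)).exists
  obtain ⟨z, hz⟩ := Set.exists_of_ssubset hYi
  obtain ⟨W, hW⟩ := exists_walk_avoiding_of_tightCompAt (hT₁ i) (hT₂ i) hYi.1 hz hai hbi
  refine ⟨a, b, W, hW, (ha.and hb).mono fun i hi => ?_⟩
  exact ⟨(hT₁ i).subset_sdiff_left (hT₁C i) hi.1, (hT₂ i).subset_sdiff_right (hT₂D i) hi.2⟩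

end Limits

lemma finite_separators_crossing {G : SimpleGraph V}
    (hlf : ∀ v : V, (G.neighborSet v).Finite) (hG : G.Connected) {A B : Set V}
    (hAB : IsSep G A B) (hfin : (A ∩ B).Finite) {k : ℕ} {𝒮 : Set (Set V × Set V)}
    (h𝒮 : ∀ t ∈ 𝒮, IsSep G t.1 t.2 ∧ TightSep G t.1 t.2 ∧ (t.1 ∩ t.2).encard ≤ (k : ℕ∞) ∧
      Crosses (A, B) t) :
    (tsSep '' 𝒮).Finite := by
  by_contra hinf
  have : Infinite (tsSep '' 𝒮) := Set.Infinite.to_subtype hinf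
  choose t ht htX using fun X : tsSep '' 𝒮 => X.2
  replace ht := fun X => h𝒮 _ (ht X)
  let 𝒰 := Filter.hyperfilter (tsSep '' 𝒮)
  set Y := {v | ∀ᶠ X in 𝒰, v ∈ (t X).1 ∩ (t X).2}
  have hYfin : Y.Finite :=
    Set.finite_of_encard_le_coe (encard_setOf_eventually_mem_le 𝒰 fun X => (ht X).2.2.1)
  have hout : ∀ v ∉ Y, ∀ᶠ X in 𝒰, v ∉ (t X).1 ∩ (t X).2 :=
    fun v hv => Ultrafilter.eventually_not.2 hv
  have hYX : ∀ᶠ X in 𝒰, Y ⊂ (t X).1 ∩ (t X).2 := by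
    have hne : ∀ᶠ X : tsSep '' 𝒮 in 𝒰, (X : Set V) ≠ Y :=
      Set.Finite.compl_mem_hyperfilter <| Set.Subsingleton.finite
        fun X₁ h₁ X₂ h₂ => Subtype.ext ((h₁ : (X₁ : Set V) = Y).trans h₂.symm)
    filter_upwards [(Filter.eventually_all_finite hYfin).2 fun v hv => hv, hne] with X hsub hXY
    exact Set.ssubset_iff_subset_ne.2 ⟨hsub, fun h => hXY ((htX X).symm.trans h.symm)⟩
  obtain ⟨a, b, W, hW, hab⟩ : ∃ a b, ∃ W : G.Walk a b, (∀ w ∈ W.support, w ∉ Y) ∧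
      ∀ᶠ X in 𝒰, a ∈ (t X).1 \ (t X).2 ∧ b ∈ (t X).2 \ (t X).1 := by
    rcases Y.eq_empty_or_nonempty with hY | ⟨y, hy⟩
    · have hdisj := (Filter.eventually_all_finite hfin).2 fun v _ => hout v (hY ▸ id)
      obtain ⟨a, b, hab⟩ := exists_eventually_mem_sdiff_of_eventually_disjoint 𝒰 hG hAB hfin
        (fun X => (ht X).1) (fun X => (ht X).2.1) (fun X => (ht X).2.2.2)
        (hdisj.mono fun _ h => Set.disjoint_left.2 h)
      exact ⟨a, b, (hG.preconnected a b).some, fun w _ => hY ▸ id, hab⟩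
    · exact exists_walk_eventually_mem_sdiff_of_eventually_ssubset 𝒰 hlf
        (fun X => (ht X).2.1) hy hYX
  exact not_eventually_mem_sdiff_of_walk (fun X => (ht X).1) W (fun w hw => hout w (hW w hw)) hab

theorem statement5_general {V : Type*} (G : SimpleGraph V)
    (hlf : ∀ v : V, (G.neighborSet v).Finite) (hG : G.Connected)
    (k : ℕ) (A B : Set V)
    (hAB : IsSep G A B) (hfin : (A ∩ B).Finite) :
    {t : Set V × Set V | IsSep G t.1 t.2 ∧ TightSep G t.1 t.2 ∧
      (t.1 ∩ t.2).encard ≤ (k : ℕ∞) ∧ Crosses (A, B) t}.Finite := by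
  refine ((finite_separators_crossing hlf hG hAB hfin fun _ h => h).biUnion
    (t := fun X => {t : Set V × Set V | IsSep G t.1 t.2 ∧ t.1 ∩ t.2 = X}) fun X hX => ?_).subset
    fun t ht => Set.mem_biUnion (Set.mem_image_of_mem tsSep ht) ⟨ht.1, rfl⟩
  obtain ⟨t, ⟨hsep, htight, hk, -⟩, rfl⟩ := hX
  exact finite_setOf_isSep_inter_eq hlf hG (Set.finite_of_encard_le_coe hk)
    (htight.inter_nonempty hG hsep)

/-- In a locally finite connected graph, every tight
separation of finite order is crossed by only finitely many tight separations
of order at most `k`. -/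
theorem statement5 {V : Type*} (G : SimpleGraph V)
    (hlf : ∀ v : V, (G.neighborSet v).Finite) (hG : G.Connected)
    (k : ℕ) (A B : Set V)
    (hAB : IsSep G A B) (ht : TightSep G A B) (hfin : (A ∩ B).Finite) :
    {t : Set V × Set V | IsSep G t.1 t.2 ∧ TightSep G t.1 t.2 ∧
      (t.1 ∩ t.2).encard ≤ (k : ℕ∞) ∧ Crosses (A, B) t}.Finite :=
  statement5_general G hlf hG k A B hAB hfin

end LS
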